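/- Let Y ~ Binom(m, p) with mp > 0. Then for every positive integer k, E[Y^k] ≤ (mp)^k · exp(k²/(2mp)). -/

import Mathlib

open Finset

/-- Stirling numbers of the second kind. -/
def stir : ℕ → ℕ → ℕ
  | 0, 0 => 1
  | 0, _ + 1 => 0
  | _ + 1, 0 => 0
  | k + 1, j + 1 => stir k j + (j + 1) * stir k (j + 1)

lemma stir_eq_zero_of_lt : ∀ {k j : ℕ}, k < j → stir k j = 0
  | 0, 0, h => absurd h (lt_irrefl 0)
  | 0, _ + 1, _ => rfl
  | k + 1, 0, h => by omega
  | k + 1, j + 1, h => by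
    rw [stir, stir_eq_zero_of_lt (by omega), stir_eq_zero_of_lt (by omega)]
    ring

lemma stir_self : ∀ k : ℕ, stir k k = 1
  | 0 => rfl
  | k + 1 => by
    rw [stir, stir_self k, stir_eq_zero_of_lt (Nat.lt_succ_self k)]
    ring

/-- `y * (y)_j = (y)_{j+1} + j * (y)_j`. -/
lemma mul_descFactorial (y j : ℕ) :
    y * y.descFactorial j = y.descFactorial (j + 1) + j * y.descFactorial j := by
  rcases le_or_gt j y with h | h
  · rw [Nat.descFactorial_succ]
    have : y = (y - j) + j := by omega
    nth_rewrite 1 [this]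
    ring
  · rw [Nat.descFactorial_eq_zero_iff_lt.2 h,
      Nat.descFactorial_eq_zero_iff_lt.2 (by omega)]
    ring

/-- Expansion of powers into descending factorials via Stirling numbers. -/
lemma pow_eq_sum_stir (y : ℕ) : ∀ k : ℕ,
    y ^ k = ∑ j ∈ range (k + 1), stir k j * y.descFactorial j
  | 0 => by simp [stir]
  | k + 1 => by
    have IH := pow_eq_sum_stir y k
    calc y ^ (k + 1) = y * y ^ k := by ring
      _ = ∑ j ∈ range (k + 1), stir k j * (y * y.descFactorial j) := by
          rw [IH, Finset.mul_sum]; congr 1; ext j; ring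
      _ = ∑ j ∈ range (k + 1), (stir k j * y.descFactorial (j + 1)
            + j * stir k j * y.descFactorial j) := by
          congr 1; ext j; rw [mul_descFactorial]; ring
      _ = ∑ j ∈ range (k + 1), stir k j * y.descFactorial (j + 1)
            + ∑ j ∈ range (k + 1), j * stir k j * y.descFactorial j :=
          Finset.sum_add_distrib
      _ = ∑ j ∈ range (k + 2), stir (k + 1) j * y.descFactorial j := by
          rw [Finset.sum_range_succ' (fun j => stir (k+1) j * y.descFactorial j) (k+1)]
          have h0 : stir (k + 1) 0 * y.descFactorial 0 = 0 := by simp [stir]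
          rw [h0, add_zero]
          have h2 : ∑ j ∈ range (k + 1), j * stir k j * y.descFactorial j
              = ∑ j ∈ range (k + 1), (j + 1) * stir k (j + 1) * y.descFactorial (j + 1) := by
            rw [Finset.sum_range_succ' (fun j => j * stir k j * y.descFactorial j) k]
            rw [Finset.sum_range_succ
              (fun j => (j+1) * stir k (j+1) * y.descFactorial (j+1)) k]
            rw [stir_eq_zero_of_lt (Nat.lt_succ_self k)]
            simp
          rw [h2, ← Finset.sum_add_distrib]
          congr 1; ext j
          show stir k j * y.descFactorial (j + 1) + (j + 1) * stir k (j + 1) * y.descFactorial (j + 1)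
            = stir (k + 1) (j + 1) * y.descFactorial (j + 1)
          rw [stir]
          ring

/-- `a^(i+1) + (i+1) * b * a^i ≤ (a+b)^(i+1)` in ℕ. -/
lemma pow_add_le : ∀ (i a b : ℕ), a ^ (i + 1) + (i + 1) * b * a ^ i ≤ (a + b) ^ (i + 1)
  | 0, a, b => by ring_nf; omega
  | i + 1, a, b => by
    have IH := pow_add_le i a b
    calc a ^ (i + 2) + (i + 2) * b * a ^ (i + 1)
        ≤ (a + b) * (a ^ (i + 1) + (i + 1) * b * a ^ i) := by
          have h : (a + b) * (a ^ (i + 1) + (i + 1) * b * a ^ i)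
              = a ^ (i + 2) + (i + 2) * b * a ^ (i + 1) + (i + 1) * b ^ 2 * a ^ i := by ring
          rw [h]; exact Nat.le_add_right _ _
      _ ≤ (a + b) * (a + b) ^ (i + 1) := Nat.mul_le_mul_left _ IH
      _ = (a + b) ^ (i + 2) := by ring

/-- Bound on Stirling numbers: `S(k, k-i) * i! ≤ C(k,2)^i`. -/
lemma stir_bound : ∀ (k i : ℕ), i ≤ k →
    stir k (k - i) * Nat.factorial i ≤ (k.choose 2) ^ i
  | 0, 0, _ => le_refl 1
  | 0, _ + 1, h => by omega
  | k + 1, i, hi => by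
    rcases Nat.eq_or_lt_of_le hi with h | h
    · subst h
      simp [stir_eq_zero_of_lt, stir]
    · -- i ≤ k
      have hik : i ≤ k := by omega
      have hsub : k + 1 - i = (k - i) + 1 := by omega
      rw [hsub, stir]
      have hchoose : (k + 1).choose 2 = k.choose 2 + k := by
        rw [Nat.choose_succ_succ]
        simp [Nat.choose_one_right, Nat.add_comm]
      rcases Nat.eq_zero_or_pos i with hi0 | hi0
      · subst hi0
        simp [Nat.sub_zero, stir_self, stir_eq_zero_of_lt (Nat.lt_succ_self k)]
      · obtain ⟨i', rfl⟩ : ∃ i', i = i' + 1 := ⟨i - 1, by omega⟩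
        have h1 : stir k (k - (i' + 1)) * Nat.factorial (i' + 1) ≤ (k.choose 2) ^ (i' + 1) :=
          stir_bound k (i' + 1) hik
        have hki : k - (i' + 1) + 1 = k - i' := by omega
        have h2 : stir k (k - i') * Nat.factorial i' ≤ (k.choose 2) ^ i' :=
          stir_bound k i' (by omega)
        rw [hki]
        have hfac : Nat.factorial (i' + 1) = (i' + 1) * Nat.factorial i' := rfl
        calc (stir k (k - (i' + 1)) + (k - i') * stir k (k - i')) * Nat.factorial (i' + 1)
            = stir k (k - (i' + 1)) * Nat.factorial (i' + 1)
              + (k - i') * (i' + 1) * (stir k (k - i') * Nat.factorial i') := by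
              rw [hfac]; ring
          _ ≤ (k.choose 2) ^ (i' + 1) + k * (i' + 1) * (k.choose 2) ^ i' := by
              apply Nat.add_le_add h1
              apply Nat.mul_le_mul (Nat.mul_le_mul_right _ (by omega)) h2
          _ ≤ ((k.choose 2) + k) ^ (i' + 1) := by
              have := pow_add_le i' (k.choose 2) k
              calc (k.choose 2) ^ (i' + 1) + k * (i' + 1) * (k.choose 2) ^ i'
                  = (k.choose 2) ^ (i' + 1) + (i' + 1) * k * (k.choose 2) ^ i' := by ring
                _ ≤ _ := this
          _ = ((k + 1).choose 2) ^ (i' + 1) := by rw [hchoose]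

lemma choose_descFactorial_eq (m j y : ℕ) (hjy : j ≤ y) (hym : y ≤ m) :
    m.choose y * y.descFactorial j = m.descFactorial j * (m - j).choose (y - j) := by
  rw [Nat.descFactorial_eq_factorial_mul_choose y j,
    Nat.descFactorial_eq_factorial_mul_choose m j]
  calc m.choose y * (Nat.factorial j * y.choose j)
      = Nat.factorial j * (m.choose y * y.choose j) := by ring
    _ = Nat.factorial j * (m.choose j * (m - j).choose (y - j)) := by
        rw [Nat.choose_mul hjy]
    _ = Nat.factorial j * m.choose j * (m - j).choose (y - j) := by ring

/-- Factorial moment bound for the binomial: `E[(Y)_j] ≤ (mp)^j`. -/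
lemma binomial_descFactorial_moment (m j : ℕ) (p : ℝ) (hp : 0 ≤ p) (hp1 : p ≤ 1) :
    ∑ y ∈ range (m + 1),
        (m.choose y : ℝ) * p ^ y * (1 - p) ^ (m - y) * (y.descFactorial j : ℝ)
      ≤ ((m : ℝ) * p) ^ j := by
  have hq : (0 : ℝ) ≤ 1 - p := by linarith
  have hmp : (0 : ℝ) ≤ (m : ℝ) * p := by positivity
  rcases le_or_gt j m with hjm | hjm
  · have hsub : Finset.Ico j (m + 1) ⊆ range (m + 1) := by
      intro y hy
      simp only [Finset.mem_Ico] at hy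
      exact Finset.mem_range.2 hy.2
    have hzero : ∀ y ∈ range (m + 1), y ∉ Finset.Ico j (m + 1) →
        (m.choose y : ℝ) * p ^ y * (1 - p) ^ (m - y) * (y.descFactorial j : ℝ) = 0 := by
      intro y hy hny
      simp only [Finset.mem_range] at hy
      simp only [Finset.mem_Ico, not_and, not_lt] at hny
      have hylt : y < j := by by_contra hc; exact absurd hy (by omega)
      rw [Nat.descFactorial_eq_zero_iff_lt.2 hylt]
      simp
    rw [← Finset.sum_subset hsub hzero, Finset.sum_Ico_eq_sum_range]
    have hrw : m + 1 - j = (m - j) + 1 := by omega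
    rw [hrw]
    have hterm : ∀ z ∈ range ((m - j) + 1),
        (m.choose (j + z) : ℝ) * p ^ (j + z) * (1 - p) ^ (m - (j + z))
            * ((j + z).descFactorial j : ℝ)
          = (m.descFactorial j : ℝ) * p ^ j
            * (((m - j).choose z : ℝ) * p ^ z * (1 - p) ^ ((m - j) - z)) := by
      intro z hz
      have hzmj : z ≤ m - j := by
        have := Finset.mem_range.1 hz; omega
      have h1 : m.choose (j + z) * (j + z).descFactorial j
          = m.descFactorial j * (m - j).choose z := by
        have := choose_descFactorial_eq m j (j + z) (by omega) (by omega)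
        rwa [Nat.add_sub_cancel_left] at this
      have h1' : (m.choose (j + z) : ℝ) * ((j + z).descFactorial j : ℝ)
          = (m.descFactorial j : ℝ) * ((m - j).choose z : ℝ) := by
        exact_mod_cast congrArg (Nat.cast : ℕ → ℝ) h1
      have h2 : m - (j + z) = (m - j) - z := by omega
      rw [h2, pow_add]
      calc (m.choose (j + z) : ℝ) * (p ^ j * p ^ z) * (1 - p) ^ ((m - j) - z)
            * ((j + z).descFactorial j : ℝ)
          = ((m.choose (j + z) : ℝ) * ((j + z).descFactorial j : ℝ))
            * (p ^ j * p ^ z * (1 - p) ^ ((m - j) - z)) := by ring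
        _ = ((m.descFactorial j : ℝ) * ((m - j).choose z : ℝ))
            * (p ^ j * p ^ z * (1 - p) ^ ((m - j) - z)) := by rw [h1']
        _ = _ := by ring
    rw [Finset.sum_congr rfl hterm, ← Finset.mul_sum]
    have hbin : ∑ z ∈ range ((m - j) + 1),
        ((m - j).choose z : ℝ) * p ^ z * (1 - p) ^ ((m - j) - z) = 1 := by
      calc ∑ z ∈ range ((m - j) + 1),
            ((m - j).choose z : ℝ) * p ^ z * (1 - p) ^ ((m - j) - z)
          = ∑ z ∈ range ((m - j) + 1),
            p ^ z * (1 - p) ^ ((m - j) - z) * ((m - j).choose z : ℝ) := by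
            apply Finset.sum_congr rfl; intro z _; ring
        _ = (p + (1 - p)) ^ (m - j) := (add_pow p (1 - p) (m - j)).symm
        _ = 1 := by norm_num
    rw [hbin, mul_one]
    calc (m.descFactorial j : ℝ) * p ^ j ≤ ((m : ℝ) ^ j) * p ^ j := by
          apply mul_le_mul_of_nonneg_right _ (by positivity)
          exact_mod_cast Nat.descFactorial_le_pow m j
      _ = ((m : ℝ) * p) ^ j := (mul_pow _ _ _).symm
  · have hz : ∀ y ∈ range (m + 1),
        (m.choose y : ℝ) * p ^ y * (1 - p) ^ (m - y) * (y.descFactorial j : ℝ) = 0 := by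
      intro y hy
      have : y < j := by have := Finset.mem_range.1 hy; omega
      rw [Nat.descFactorial_eq_zero_iff_lt.2 this]
      simp
    rw [Finset.sum_eq_zero hz]
    positivity

/-- Moment bound for binomial random variables: `E[Y^k] ≤ (mp)^k · exp(k²/(2mp))`. -/
theorem binomial_moment_bound (m : ℕ) (p : ℝ) (hp : 0 < p) (hp1 : p < 1)
    (hmp : 0 < (m : ℝ) * p) (k : ℕ) (hk : 0 < k) :
    ∑ y ∈ Finset.range (m + 1),
        (m.choose y : ℝ) * p ^ y * (1 - p) ^ (m - y) * (y : ℝ) ^ k ≤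
      ((m : ℝ) * p) ^ k * Real.exp ((k : ℝ) ^ 2 / (2 * ((m : ℝ) * p))) := by
  set x : ℝ := (m : ℝ) * p with hxdef
  have hx0 : 0 < x := hmp
  have hpowr : ∀ y : ℕ, ((y : ℝ)) ^ k
      = ∑ j ∈ range (k + 1), (stir k j : ℝ) * (y.descFactorial j : ℝ) := by
    intro y
    have h := pow_eq_sum_stir y k
    have := congrArg (Nat.cast : ℕ → ℝ) h
    push_cast at this
    exact this
  calc ∑ y ∈ range (m + 1), (m.choose y : ℝ) * p ^ y * (1 - p) ^ (m - y) * (y : ℝ) ^ k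
      = ∑ y ∈ range (m + 1), ∑ j ∈ range (k + 1),
          (stir k j : ℝ) * ((m.choose y : ℝ) * p ^ y * (1 - p) ^ (m - y)
            * (y.descFactorial j : ℝ)) := by
        apply Finset.sum_congr rfl
        intro y _
        rw [hpowr y, Finset.mul_sum]
        apply Finset.sum_congr rfl
        intro j _
        ring
    _ = ∑ j ∈ range (k + 1), (stir k j : ℝ) * ∑ y ∈ range (m + 1),
          (m.choose y : ℝ) * p ^ y * (1 - p) ^ (m - y) * (y.descFactorial j : ℝ) := by
        rw [Finset.sum_comm]
        apply Finset.sum_congr rfl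
        intro j _
        rw [Finset.mul_sum]
    _ ≤ ∑ j ∈ range (k + 1), (stir k j : ℝ) * x ^ j := by
        apply Finset.sum_le_sum
        intro j _
        exact mul_le_mul_of_nonneg_left
          (binomial_descFactorial_moment m j p hp.le hp1.le)
          (by positivity)
    _ = ∑ i ∈ range (k + 1), (stir k (k - i) : ℝ) * x ^ (k - i) := by
        rw [← Finset.sum_range_reflect (fun j => (stir k j : ℝ) * x ^ j) (k + 1)]
        simp only [Nat.add_sub_cancel]
    _ ≤ ∑ i ∈ range (k + 1), x ^ k * (((k : ℝ) ^ 2 / (2 * x)) ^ i / (Nat.factorial i : ℝ)) := by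
        apply Finset.sum_le_sum
        intro i hi
        have hik : i ≤ k := by have := Finset.mem_range.1 hi; omega
        have hfac : (0 : ℝ) < (Nat.factorial i : ℝ) := by
          exact_mod_cast Nat.factorial_pos i
        have hsb : (stir k (k - i) : ℝ) * (Nat.factorial i : ℝ) ≤ ((k : ℝ) ^ 2 / 2) ^ i := by
          have h1 : (stir k (k - i) : ℝ) * (Nat.factorial i : ℝ) ≤ ((k.choose 2 : ℕ) : ℝ) ^ i := by
            exact_mod_cast stir_bound k i hik
          refine h1.trans (pow_le_pow_left₀ (by positivity) ?_ i)
          rw [Nat.cast_choose_two]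
          have hk1 : (k : ℝ) * ((k : ℝ) - 1) ≤ (k : ℝ) ^ 2 := by nlinarith [Nat.cast_nonneg (α := ℝ) k]
          linarith
        have hstir : (stir k (k - i) : ℝ) ≤ ((k : ℝ) ^ 2 / 2) ^ i / (Nat.factorial i : ℝ) := by
          rw [le_div_iff₀ hfac]
          exact hsb
        have hxpow : x ^ (k - i) = x ^ k / x ^ i := pow_sub₀ x hx0.ne' hik
        calc (stir k (k - i) : ℝ) * x ^ (k - i)
            ≤ (((k : ℝ) ^ 2 / 2) ^ i / (Nat.factorial i : ℝ)) * (x ^ k / x ^ i) := by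
              rw [hxpow]
              apply mul_le_mul_of_nonneg_right hstir (by positivity)
          _ = x ^ k * (((k : ℝ) ^ 2 / (2 * x)) ^ i / (Nat.factorial i : ℝ)) := by
              have h2 : (k : ℝ) ^ 2 / (2 * x) = ((k : ℝ) ^ 2 / 2) / x := by ring
              rw [h2, div_pow]
              simp only [div_pow]
              ring
    _ = x ^ k * ∑ i ∈ range (k + 1), ((k : ℝ) ^ 2 / (2 * x)) ^ i / (Nat.factorial i : ℝ) :=
        (Finset.mul_sum _ _ _).symm
    _ ≤ x ^ k * Real.exp ((k : ℝ) ^ 2 / (2 * x)) := by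
        apply mul_le_mul_of_nonneg_left _ (by positivity)
        exact Real.sum_le_exp_of_nonneg (by positivity) (k + 1)
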